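/- Let k be a field of characteristic ≠ 2 containing a primitive r-th root of unity, where r ≥ 3 is an integer, and let K = k(a_1, …, a_{r−1}) be the rational function field in r−1 independent indeterminates over k. Let u_i := a_1^{r−i}·a_i + a_{r−1}^{r−i}·a_{r−i} ∈ K for 1 ≤ i ≤ r−1. Then the field extension K over the subfield k(u_1, …, u_{r−1}) is finite of degree exactly 2r. -/

import Mathlib

/-!
Let `F = k(u₁, …, u_{r-1})`. Since `u_{r-1} = 2 a₁ a_{r-1}` and
`a_j (a₁ʳ - a_{r-1}ʳ) = a₁ʲ u_j - a_{r-1}^{r-j} u_{r-j}`, the single element `a₁` generates `K`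
over `F`; and `a₁ʳ`, `a_{r-1}ʳ` are the roots of `Y² - u₁ Y + (u_{r-1}/2)ʳ`, so `a₁` is a root of
a monic polynomial of degree `2r` over `F` and `[K : F] ≤ 2r`. Conversely, `a_j ↦ ηᵐʲ a_j` and
`a_j ↦ a_{r-j}` generate `2r` distinct automorphisms of `K` fixing every `u_i`, so `[K : F] ≥ 2r`.
-/

namespace MvPolynomial

variable {R σ : Type*} [CommSemiring R]

noncomputable def scaleEquiv (c : σ → Rˣ) : MvPolynomial σ R ≃ₐ[R] MvPolynomial σ R :=
  AlgEquiv.ofAlgHom (aeval fun i => C (c i : R) * X i) (aeval fun i => C (↑(c i)⁻¹ : R) * X i)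
    (algHom_ext fun i => by simp [← mul_assoc, ← C_mul])
    (algHom_ext fun i => by simp [← mul_assoc, ← C_mul])

@[simp]
theorem scaleEquiv_X (c : σ → Rˣ) (i : σ) : scaleEquiv c (X i) = C (c i : R) * X i :=
  aeval_X (R := R) _ i

theorem C_mul_X_pow_ne_C_mul_X_pow {c : R} (hc : c ≠ 0) {i j : σ} (hij : i ≠ j) {n : ℕ}
    (hn : n ≠ 0) (c' : R) : (C c * X i ^ n : MvPolynomial σ R) ≠ C c' * X j ^ n := by
  classical
  intro h
  exact hc (by simpa [hij.symm, hn] using congrArg (eval (Pi.single i 1)) h)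

end MvPolynomial

open MvPolynomial IntermediateField in
theorem IsFractionRing.adjoin_algebraMap_X_eq_top {k K σ : Type*} [Field k] [Field K]
    [Algebra (MvPolynomial σ k) K] [IsFractionRing (MvPolynomial σ k) K] [Algebra k K]
    [IsScalarTower k (MvPolynomial σ k) K] :
    adjoin k (Set.range fun i => algebraMap (MvPolynomial σ k) K (X i)) = ⊤ := by
  rw [← IsFractionRing.algHom_fieldRange_eq_of_comp_eq_of_range_eq (f := AlgHom.id k K)
    (g := IsScalarTower.toAlgHom k (MvPolynomial σ k) K) rfl, AlgHom.fieldRange_eq_top]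
  · exact Function.surjective_id
  · rw [← Algebra.map_top, ← adjoin_range_X, AlgHom.map_adjoin, ← Set.range_comp]
    rfl

namespace IntermediateField

open Polynomial

variable {F E : Type*} [Field F] [Field E] [Algebra F E]

theorem mem_fixingSubgroup_adjoin_iff {S : Set E} {σ : E ≃ₐ[F] E} :
    σ ∈ (adjoin F S).fixingSubgroup ↔ ∀ x ∈ S, σ x = x := by
  refine ⟨fun h x hx => (mem_fixingSubgroup_iff _ _).mp h x (subset_adjoin F S hx), fun h => ?_⟩
  rw [mem_fixingSubgroup_iff]
  intro x hx
  have := adjoin_algHom_ext F (φ₁ := σ.toAlgHom.comp (adjoin F S).val) (φ₂ := (adjoin F S).val) h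
  exact congr($this ⟨x, hx⟩)

theorem natCard_le_finrank_of_injective {ι : Type*} [Finite ι] (L : IntermediateField F E)
    [FiniteDimensional L E] {g : ι → E ≃ₐ[F] E} (hg : Function.Injective g)
    (hL : ∀ i, g i ∈ L.fixingSubgroup) : Nat.card ι ≤ Module.finrank L E := by
  let g' : ι → E →ₐ[L] E := fun i => (fixingSubgroupEquiv L ⟨g i, hL i⟩ : E ≃ₐ[L] E)
  have hg' : Function.Injective g' := fun i j hij =>
    hg (AlgEquiv.ext fun x => congr($hij x))
  exact (Nat.card_le_card_of_injective g' hg').trans (card_algHom_le_finrank L E E)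

theorem finiteDimensional_of_adjoin_simple_eq_top {x : E} (hx : IsIntegral F x) (htop : F⟮x⟯ = ⊤) :
    FiniteDimensional F E := by
  have := adjoin.finiteDimensional hx
  rw [htop] at this
  exact Module.Finite.equiv topEquiv.toLinearEquiv

theorem finrank_le_natDegree_of_adjoin_simple_eq_top {x : E} (htop : F⟮x⟯ = ⊤) {p : F[X]}
    (hp : p.Monic) (hpx : aeval x p = 0) : Module.finrank F E ≤ p.natDegree := by
  rw [← finrank_top', ← htop, adjoin.finrank ⟨p, hp, hpx⟩]
  exact natDegree_le_natDegree (minpoly.min F x hp hpx)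

end IntermediateField

section DihedralInvariant

open IntermediateField

variable {k L : Type*}

def dihedralInvariant [CommSemiring L] (r : ℕ) (a : ℕ → L) (i : ℕ) : L :=
  a 1 ^ (r - i) * a i + a (r - 1) ^ (r - i) * a (r - i)

variable {r : ℕ} {a : ℕ → L}

theorem map_dihedralInvariant {L' F : Type*} [CommSemiring L] [CommSemiring L'] [FunLike F L L']
    [RingHomClass F L L'] (f : F) (i : ℕ) :
    f (dihedralInvariant r a i) = dihedralInvariant r (f ∘ a) i := by
  simp [dihedralInvariant]

theorem dihedralInvariant_one [CommSemiring L] (hr : 1 ≤ r) :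
    dihedralInvariant r a 1 = a 1 ^ r + a (r - 1) ^ r := by
  rw [dihedralInvariant, ← pow_succ, ← pow_succ, Nat.sub_add_cancel hr]

theorem dihedralInvariant_sub_one [CommSemiring L] (hr : 1 ≤ r) :
    dihedralInvariant r a (r - 1) = 2 * a 1 * a (r - 1) := by
  rw [dihedralInvariant, Nat.sub_sub_self hr]
  ring

theorem dihedralInvariant_of_rotate [CommRing L] {b : ℕ → L} {ζ : L} (hζ : ζ ^ r = 1)
    (hb : ∀ j, 1 ≤ j → j ≤ r - 1 → b j = ζ ^ j * a j) {i : ℕ} (hi : 1 ≤ i) (hi' : i ≤ r - 1) :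
    dihedralInvariant r b i = dihedralInvariant r a i := by
  have h1 : ζ ^ (r - i) * ζ ^ i = 1 := by rw [← pow_add, Nat.sub_add_cancel (by omega), hζ]
  have h2 : (ζ ^ (r - 1)) ^ (r - i) * ζ ^ (r - i) = 1 := by
    rw [← mul_pow, ← pow_succ, Nat.sub_add_cancel (by omega), hζ, one_pow]
  simp only [dihedralInvariant]
  rw [hb 1 le_rfl (by omega), hb i hi hi', hb (r - 1) (by omega) le_rfl,
    hb (r - i) (by omega) (by omega), pow_one]
  linear_combination a 1 ^ (r - i) * a i * h1 + a (r - 1) ^ (r - i) * a (r - i) * h2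

theorem dihedralInvariant_of_reflect [CommSemiring L] {b : ℕ → L}
    (hb : ∀ j, 1 ≤ j → j ≤ r - 1 → b j = a (r - j)) {i : ℕ} (hi : 1 ≤ i) (hi' : i ≤ r - 1) :
    dihedralInvariant r b i = dihedralInvariant r a i := by
  simp only [dihedralInvariant]
  rw [hb 1 le_rfl (by omega), hb i hi hi', hb (r - 1) (by omega) le_rfl,
    hb (r - i) (by omega) (by omega), Nat.sub_sub_self (by omega : i ≤ r),
    Nat.sub_sub_self (by omega : 1 ≤ r), add_comm]

theorem mul_sub_eq_dihedralInvariant [CommRing L] {j : ℕ} (hj : j ≤ r) :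
    a j * (a 1 ^ r - a (r - 1) ^ r) =
      a 1 ^ j * dihedralInvariant r a j - a (r - 1) ^ (r - j) * dihedralInvariant r a (r - j) := by
  have h1 : a 1 ^ j * a 1 ^ (r - j) = a 1 ^ r := by rw [← pow_add, Nat.add_sub_cancel' hj]
  have h2 : a (r - 1) ^ (r - j) * a (r - 1) ^ j = a (r - 1) ^ r := by
    rw [← pow_add, Nat.sub_add_cancel hj]
  simp only [dihedralInvariant, Nat.sub_sub_self hj]
  linear_combination a j * h2 - a j * h1

open Polynomial in
theorem exists_monic_natDegree_aeval_dihedral_eq_zero {F : Type*} [Field F] [Field L]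
    [Algebra F L] (hr : 1 ≤ r) (h₂ : (2 : L) ≠ 0) {u₁ v : F}
    (hu₁ : algebraMap F L u₁ = dihedralInvariant r a 1)
    (hv : algebraMap F L v = dihedralInvariant r a (r - 1)) :
    ∃ p : F[X], p.Monic ∧ p.natDegree = 2 * r ∧ aeval (a 1) p = 0 := by
  have hq : (X ^ 2 - C u₁ * X + C ((v / 2) ^ r)).Monic := by monicity!
  have hq₂ : (X ^ 2 - C u₁ * X + C ((v / 2) ^ r)).natDegree = 2 := by compute_degree!
  refine ⟨(X ^ 2 - C u₁ * X + C ((v / 2) ^ r)).comp (X ^ r),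
    hq.comp (monic_X_pow r) (by simp; omega), by rw [natDegree_comp, natDegree_X_pow, hq₂], ?_⟩
  have hv₂ : algebraMap F L (v / 2) = a 1 * a (r - 1) := by
    rw [map_div₀, hv, map_ofNat, dihedralInvariant_sub_one hr]
    field_simp
  simp only [aeval_comp, map_add, map_sub, map_mul, map_pow, aeval_X, aeval_C, hu₁, hv₂,
    dihedralInvariant_one hr]
  ring

theorem mem_of_dihedralInvariant_mem {S : Type*} [Field L] [SetLike S L] [SubfieldClass S L]
    {E : S} (h₂ : (2 : L) ≠ 0) (ha₁ : a 1 ≠ 0) (hD : a 1 ^ r ≠ a (r - 1) ^ r)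
    (hu : ∀ i, 1 ≤ i → i ≤ r - 1 → dihedralInvariant r a i ∈ E) (hE : a 1 ∈ E) {j : ℕ}
    (hj : 1 ≤ j) (hj' : j ≤ r - 1) : a j ∈ E := by
  have hlast : a (r - 1) ∈ E := by
    have : a (r - 1) = dihedralInvariant r a (r - 1) / (2 * a 1) := by
      rw [dihedralInvariant_sub_one (by omega)]
      field_simp
    rw [this]
    exact div_mem (hu _ (by omega) le_rfl) (mul_mem (ofNat_mem E 2) hE)
  rw [eq_div_of_mul_eq (sub_ne_zero.mpr hD) (mul_sub_eq_dihedralInvariant (by omega : j ≤ r))]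
  exact div_mem (sub_mem (mul_mem (pow_mem hE j) (hu j hj hj'))
    (mul_mem (pow_mem hlast _) (hu _ (by omega) (by omega))))
    (sub_mem (pow_mem hE r) (pow_mem hlast r))

variable (k) in
def dihedralInvariantField [Field k] [Field L] [Algebra k L] (r : ℕ) (a : ℕ → L) :
    IntermediateField k L :=
  adjoin k {x | ∃ i, 1 ≤ i ∧ i ≤ r - 1 ∧ x = dihedralInvariant r a i}

theorem mem_fixingSubgroup_of_rotate [Field k] [Field L] [Algebra k L] {σ : L ≃ₐ[k] L} {ζ : L}
    (hζ : ζ ^ r = 1) (hσ : ∀ j, 1 ≤ j → j ≤ r - 1 → σ (a j) = ζ ^ j * a j) :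
    σ ∈ (dihedralInvariantField k r a).fixingSubgroup := by
  rw [dihedralInvariantField, mem_fixingSubgroup_adjoin_iff]
  rintro _ ⟨i, hi, hi', rfl⟩
  rw [map_dihedralInvariant]
  exact dihedralInvariant_of_rotate hζ hσ hi hi'

theorem mem_fixingSubgroup_of_reflect [Field k] [Field L] [Algebra k L] {σ : L ≃ₐ[k] L}
    (hσ : ∀ j, 1 ≤ j → j ≤ r - 1 → σ (a j) = a (r - j)) :
    σ ∈ (dihedralInvariantField k r a).fixingSubgroup := by
  rw [dihedralInvariantField, mem_fixingSubgroup_adjoin_iff]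
  rintro _ ⟨i, hi, hi', rfl⟩
  rw [map_dihedralInvariant]
  exact dihedralInvariant_of_reflect hσ hi hi'

end DihedralInvariant

section FractionField

open MvPolynomial IntermediateField

variable {k K : Type*} [Field k] [Field K] {r : ℕ} [Algebra (MvPolynomial (Fin (r - 1)) k) K]
  [IsFractionRing (MvPolynomial (Fin (r - 1)) k) K] [Algebra k K]
  [IsScalarTower k (MvPolynomial (Fin (r - 1)) k) K] {a : ℕ → K}

-- `X i` stands for `a (i + 1)`, so `Fin.rev` on the variables is `a j ↦ a (r - j)`.

variable (K r) in
noncomputable def dihedralRotation (ω : kˣ) : K ≃ₐ[k] K :=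
  IsFractionRing.algEquivOfAlgEquiv (scaleEquiv fun i : Fin (r - 1) => ω ^ (i.1 + 1))

variable (k K r) in
noncomputable def dihedralReflection : K ≃ₐ[k] K :=
  IsFractionRing.algEquivOfAlgEquiv (renameEquiv k (Fin.revPerm (n := r - 1)))

variable (K r) in
noncomputable def dihedralAut (ζ : kˣ) (g : Fin r × Bool) : K ≃ₐ[k] K :=
  dihedralRotation K r (ζ ^ g.1.1) * if g.2 then dihedralReflection k K r else 1

theorem dihedralRotation_apply
    (ha : ∀ i : Fin (r - 1), a (i.1 + 1) = algebraMap (MvPolynomial (Fin (r - 1)) k) K (X i))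
    (ω : kˣ) {j : ℕ} (hj : 1 ≤ j) (hj' : j ≤ r - 1) :
    dihedralRotation K r ω (a j) = algebraMap k K ↑(ω ^ j) * a j := by
  obtain ⟨i, rfl⟩ : ∃ i : Fin (r - 1), i.1 + 1 = j := ⟨⟨j - 1, by omega⟩, by simp; omega⟩
  rw [ha, dihedralRotation, IsFractionRing.algEquivOfAlgEquiv_algebraMap, scaleEquiv_X, map_mul,
    IsScalarTower.algebraMap_apply k (MvPolynomial (Fin (r - 1)) k) K, algebraMap_eq]

theorem dihedralReflection_apply
    (ha : ∀ i : Fin (r - 1), a (i.1 + 1) = algebraMap (MvPolynomial (Fin (r - 1)) k) K (X i))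
    {j : ℕ} (hj : 1 ≤ j) (hj' : j ≤ r - 1) :
    dihedralReflection k K r (a j) = a (r - j) := by
  obtain ⟨i, rfl⟩ : ∃ i : Fin (r - 1), i.1 + 1 = j := ⟨⟨j - 1, by omega⟩, by simp; omega⟩
  rw [ha, dihedralReflection, IsFractionRing.algEquivOfAlgEquiv_algebraMap, renameEquiv_apply,
    rename_X, show r - (i.1 + 1) = (Fin.revPerm i).1 + 1 by simp; omega, ha]

theorem algebraMap_mul_pow_ne
    (ha : ∀ i : Fin (r - 1), a (i.1 + 1) = algebraMap (MvPolynomial (Fin (r - 1)) k) K (X i))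
    (hr : 3 ≤ r) {c : k} (hc : c ≠ 0) (c' : k) {e : ℕ} (he : e ≠ 0) :
    algebraMap k K c * a 1 ^ e ≠ algebraMap k K c' * a (r - 1) ^ e := by
  have hlast := ha ⟨r - 2, by omega⟩
  rw [show r - 2 + 1 = r - 1 by omega] at hlast
  rw [ha ⟨0, by omega⟩, hlast, IsScalarTower.algebraMap_apply k (MvPolynomial (Fin (r - 1)) k) K,
    IsScalarTower.algebraMap_apply k (MvPolynomial (Fin (r - 1)) k) K, ← map_pow, ← map_pow,
    ← map_mul, ← map_mul, (IsFractionRing.injective _ K).ne_iff, algebraMap_eq]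
  exact C_mul_X_pow_ne_C_mul_X_pow hc (by simp; omega) he c'

theorem dihedralAut_injective
    (ha : ∀ i : Fin (r - 1), a (i.1 + 1) = algebraMap (MvPolynomial (Fin (r - 1)) k) K (X i))
    (hr : 3 ≤ r) {ζ : kˣ} (hζ : IsPrimitiveRoot (ζ : k) r) :
    Function.Injective (dihedralAut K r ζ) := by
  have hcross (c : kˣ) (c' : k) : algebraMap k K c * a 1 ≠ algebraMap k K c' * a (r - 1) := by
    simpa using algebraMap_mul_pow_ne ha hr c.ne_zero c' one_ne_zero
  have hcancel {m m' : Fin r}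
      (h : algebraMap k K ↑(ζ ^ m.1) * a 1 = algebraMap k K ↑(ζ ^ m'.1) * a 1) : m = m' := by
    have ha₁ : a 1 ≠ 0 := by simpa using hcross 1 0
    have := (algebraMap k K).injective (mul_right_cancel₀ ha₁ h)
    simp only [Units.val_pow_eq_pow_val] at this
    exact Fin.ext (hζ.pow_inj m.2 m'.2 this)
  rintro ⟨m, b⟩ ⟨m', b'⟩ h
  have e₁ := congr($h (a 1))
  have e₂ := congr($h (a (r - 1)))
  cases b <;> cases b' <;>
    simp only [dihedralAut, AlgEquiv.mul_apply, Bool.false_eq_true, if_true, if_false,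
      AlgEquiv.one_apply, dihedralReflection_apply ha le_rfl (by omega : 1 ≤ r - 1),
      dihedralReflection_apply ha (by omega : 1 ≤ r - 1) le_rfl,
      Nat.sub_sub_self (by omega : 1 ≤ r),
      dihedralRotation_apply ha _ le_rfl (by omega : 1 ≤ r - 1),
      dihedralRotation_apply ha _ (by omega : 1 ≤ r - 1) le_rfl, pow_one] at e₁ e₂
  · rw [hcancel e₁]
  · exact absurd e₁ (hcross _ _)
  · exact absurd e₁.symm (hcross _ _)
  · rw [hcancel e₂]

theorem dihedralAut_mem_fixingSubgroup
    (ha : ∀ i : Fin (r - 1), a (i.1 + 1) = algebraMap (MvPolynomial (Fin (r - 1)) k) K (X i))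
    {ζ : kˣ} (hζ : ζ ^ r = 1) (g : Fin r × Bool) :
    dihedralAut K r ζ g ∈ (dihedralInvariantField k r a).fixingSubgroup := by
  refine mul_mem (mem_fixingSubgroup_of_rotate (ζ := algebraMap k K ↑(ζ ^ g.1.1)) ?_ ?_) ?_
  · rw [← map_pow, ← Units.val_pow_eq_pow_val, ← pow_mul, pow_mul', hζ, one_pow, Units.val_one,
      map_one]
  · intro j hj hj'
    rw [dihedralRotation_apply ha _ hj hj', ← map_pow, ← Units.val_pow_eq_pow_val]
  · split
    · exact mem_fixingSubgroup_of_reflect fun j => dihedralReflection_apply ha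
    · exact one_mem _

theorem adjoin_simple_eq_top_of_dihedralInvariantField
    (ha : ∀ i : Fin (r - 1), a (i.1 + 1) = algebraMap (MvPolynomial (Fin (r - 1)) k) K (X i))
    (hr : 3 ≤ r) (h₂ : (2 : K) ≠ 0) : (dihedralInvariantField k r a)⟮a 1⟯ = ⊤ := by
  set F := dihedralInvariantField k r a
  have ha₁ : a 1 ≠ 0 := by simpa using algebraMap_mul_pow_ne ha hr one_ne_zero 0 one_ne_zero
  have hD : a 1 ^ r ≠ a (r - 1) ^ r := by
    simpa using algebraMap_mul_pow_ne ha hr one_ne_zero 1 (by omega : r ≠ 0)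
  refine top_le_iff.mp ((adjoin_eq_top_of_adjoin_eq_top k (E := F)
    (IsFractionRing.adjoin_algebraMap_X_eq_top (σ := Fin (r - 1)))).ge.trans
      (adjoin_le_iff.mpr ?_))
  rintro _ ⟨i, rfl⟩
  simp only [SetLike.mem_coe, ← ha i]
  exact mem_of_dihedralInvariant_mem h₂ ha₁ hD
    (fun j hj hj' =>
      IntermediateField.algebraMap_mem F⟮a 1⟯ ⟨_, subset_adjoin _ _ ⟨j, hj, hj', rfl⟩⟩)
    (mem_adjoin_simple_self F _) (by omega) (by omega)

theorem two_mul_le_finrank_dihedralInvariantField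
    (ha : ∀ i : Fin (r - 1), a (i.1 + 1) = algebraMap (MvPolynomial (Fin (r - 1)) k) K (X i))
    (hr : 3 ≤ r) {η : k} (hη : IsPrimitiveRoot η r)
    [FiniteDimensional (dihedralInvariantField k r a) K] :
    2 * r ≤ Module.finrank (dihedralInvariantField k r a) K := by
  have hη' := hη.isUnit (by omega)
  simpa [mul_comm] using natCard_le_finrank_of_injective _
    (dihedralAut_injective ha hr (ζ := hη'.unit) hη)
    (dihedralAut_mem_fixingSubgroup ha (by ext; simpa using hη.pow_eq_one))

end FractionField

open IntermediateField in
/-- Let `k` be a field of characteristic `≠ 2` containing a primitive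
`r`-th root of unity (`r ≥ 3`), and `K = k(a_1,…,a_(r-1))` the rational function field in
`r-1` indeterminates. With `u_i = a_1^(r-i)·a_i + a_(r-1)^(r-i)·a_(r-i)` the dihedral
invariants, the extension `K / k(u_1,…,u_(r-1))` is finite of degree exactly `2r`. -/
theorem finrank_over_dihedral_invariants {k K : Type*} [Field k] [Field K]
    (hchar : ringChar k ≠ 2) (r : ℕ) (hr : 3 ≤ r)
    (η : k) (hη : IsPrimitiveRoot η r)
    [Algebra (MvPolynomial (Fin (r - 1)) k) K]
    [IsFractionRing (MvPolynomial (Fin (r - 1)) k) K]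
    [Algebra k K] [IsScalarTower k (MvPolynomial (Fin (r - 1)) k) K]
    (a : ℕ → K)
    (ha : ∀ i : Fin (r - 1),
      a (i.1 + 1) = algebraMap (MvPolynomial (Fin (r - 1)) k) K (MvPolynomial.X i))
    (u : ℕ → K)
    (hu : ∀ i : ℕ, u i = a 1 ^ (r - i) * a i + a (r - 1) ^ (r - i) * a (r - i)) :
    FiniteDimensional
      (IntermediateField.adjoin k {x : K | ∃ i : ℕ, 1 ≤ i ∧ i ≤ r - 1 ∧ x = u i}) K ∧
    Module.finrank
      (IntermediateField.adjoin k {x : K | ∃ i : ℕ, 1 ≤ i ∧ i ≤ r - 1 ∧ x = u i}) K =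
      2 * r := by
  obtain rfl : u = dihedralInvariant r a := funext hu
  change FiniteDimensional (dihedralInvariantField k r a) K ∧
    Module.finrank (dihedralInvariantField k r a) K = 2 * r
  set F := dihedralInvariantField k r a
  have hF (i : ℕ) (hi : 1 ≤ i) (hi' : i ≤ r - 1) : dihedralInvariant r a i ∈ F :=
    subset_adjoin _ _ ⟨i, hi, hi', rfl⟩
  have h₂ : (2 : K) ≠ 0 := Ring.two_ne_zero (Algebra.ringChar_eq k K ▸ hchar)
  have htop := adjoin_simple_eq_top_of_dihedralInvariantField ha hr h₂
  obtain ⟨p, hp, hpdeg, hpa⟩ := exists_monic_natDegree_aeval_dihedral_eq_zero (F := F) (a := a)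
    (by omega) h₂ (u₁ := ⟨_, hF 1 le_rfl (by omega)⟩) (v := ⟨_, hF (r - 1) (by omega) le_rfl⟩)
    rfl rfl
  have := finiteDimensional_of_adjoin_simple_eq_top ⟨p, hp, hpa⟩ htop
  exact ⟨this, le_antisymm (hpdeg ▸ finrank_le_natDegree_of_adjoin_simple_eq_top htop hp hpa)
    (two_mul_le_finrank_dihedralInvariantField ha hr hη)⟩
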